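/- Let l ≥ 1 be an integer and let n, m be integers with 1 ≤ n < m ≤ l. Then |cos(πn/(l+1)) − cos(πm/(l+1))| ≥ 2·sin²(π/(2(l+1))). -/
import Mathlib

open Real

lemma sin_ge_aux {c x : ℝ} (hc : 0 ≤ c) (hcp : c ≤ π/2) (h1 : c ≤ x) (h2 : x ≤ π - c) :
    Real.sin c ≤ Real.sin x := by
  have hπ := Real.pi_pos
  rcases le_or_gt x (π/2) with h | h
  · exact Real.strictMonoOn_sin.monotoneOn ⟨by linarith, hcp⟩ ⟨by linarith, h⟩ h1
  · rw [← Real.sin_pi_sub x]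
    exact Real.strictMonoOn_sin.monotoneOn ⟨by linarith, hcp⟩ ⟨by linarith, by linarith⟩
      (by linarith)

/-- For `1 ≤ n < m ≤ l`, `|cos(πn/(l+1)) − cos(πm/(l+1))| ≥ 2 sin²(π/(2(l+1)))`. -/
theorem stmt_15 (l n m : ℕ) (hl : 1 ≤ l) (h1 : 1 ≤ n) (h2 : n < m) (h3 : m ≤ l) :
    2 * Real.sin (π/(2*((l : ℝ)+1)))^2
      ≤ |Real.cos (π*n/(l+1)) - Real.cos (π*m/(l+1))| := by
  have hπ := Real.pi_pos
  have hn : (1:ℝ) ≤ n := by exact_mod_cast h1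
  have hnm : (n:ℝ) + 1 ≤ m := by exact_mod_cast h2
  have hm : (m:ℝ) ≤ l := by exact_mod_cast h3
  have hl' : (1:ℝ) ≤ l := by exact_mod_cast hl
  set L : ℝ := (l:ℝ) + 1 with hLdef
  have hL1 : 1 ≤ L := by rw [hLdef]; linarith
  have hL0 : (0:ℝ) < L := by linarith
  have h2L : (0:ℝ) < 2*L := by linarith
  set c : ℝ := π/(2*L) with hcdef
  set a : ℝ := π*(n:ℝ)/L with hadef
  set b : ℝ := π*(m:ℝ)/L with hbdef
  have hc0 : 0 < c := by positivity
  have hc2 : c ≤ π/2 := by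
    rw [hcdef, div_le_div_iff₀ h2L two_pos]; nlinarith
  have key : Real.cos a - Real.cos b
      = 2 * Real.sin ((a+b)/2) * Real.sin ((b-a)/2) := by
    rw [Real.cos_sub_cos, show (a-b)/2 = -((b-a)/2) by ring, Real.sin_neg]; ring
  have hs1 : c ≤ (a+b)/2 := by
    have e : (a+b)/2 = π*((n:ℝ)+m)/(2*L) := by rw [hadef, hbdef]; field_simp
    rw [e, hcdef]; gcongr; nlinarith
  have hs2 : (a+b)/2 ≤ π - c := by
    have e : (a+b)/2 = π*((n:ℝ)+m)/(2*L) := by rw [hadef, hbdef]; field_simp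
    have e2 : π - c = π*(2*L-1)/(2*L) := by rw [hcdef]; field_simp
    rw [e, e2]; gcongr <;> linarith
  have ht1 : c ≤ (b-a)/2 := by
    have e : (b-a)/2 = π*((m:ℝ)-n)/(2*L) := by rw [hadef, hbdef]; field_simp
    rw [e, hcdef]; gcongr; nlinarith
  have ht2 : (b-a)/2 ≤ π - c := by
    have e : (b-a)/2 = π*((m:ℝ)-n)/(2*L) := by rw [hadef, hbdef]; field_simp
    have e2 : π - c = π*(2*L-1)/(2*L) := by rw [hcdef]; field_simp
    rw [e, e2]; gcongr <;> linarith
  have hsc : 0 ≤ Real.sin c := Real.sin_nonneg_of_nonneg_of_le_pi hc0.le (by linarith)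
  have hA : Real.sin c ≤ Real.sin ((a+b)/2) := sin_ge_aux hc0.le hc2 hs1 hs2
  have hB : Real.sin c ≤ Real.sin ((b-a)/2) := sin_ge_aux hc0.le hc2 ht1 ht2
  have hst : Real.sin c * Real.sin c
      ≤ Real.sin ((a+b)/2) * Real.sin ((b-a)/2) :=
    mul_le_mul hA hB hsc (le_trans hsc hA)
  have main : 2 * Real.sin c ^ 2 ≤ Real.cos a - Real.cos b := by
    rw [key, pow_two]; linarith
  exact le_trans main (le_abs_self _)
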